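/- Every canonical T-tree can be reached from the single-node T-tree (t,⟨⟩) by a sequence of unit extensions each of which yields a canonical T-tree; equivalently, the subgraph of the state graph induced by canonical T-trees is connected. -/

import Mathlib

/-- A T-tree: a node labeled by a type (ℕ), with children grouped into
    T-lists (one list per component type, in type order). -/
inductive TTree : Type where
  | node : ℕ → List (List TTree) → TTree

namespace TTree

/-- The root type (label) of a T-tree. -/
def label : TTree → ℕ
  | .node a _ => a

/-- The list of T-lists of a T-tree. -/
def tlists : TTree → List (List TTree)
  | .node _ ls => ls

/-- A T-tree is a leaf iff all its T-lists are empty. -/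
def isLeaf : TTree → Bool
  | .node _ ls => ls.all List.isEmpty

mutual
  /-- Comparison of T-trees: root types first, then the sequences of T-lists
      lexicographically by the T-list order ≪. -/
  def cmpT : TTree → TTree → Ordering
    | .node a ls, .node b ls' => (compare a b).then (cmpOuter ls ls')
  /-- Lexicographic comparison of sequences of T-lists by ≪
      (≪ compares T-lists by length first, then lexicographically by ⋞). -/
  def cmpOuter : List (List TTree) → List (List TTree) → Ordering
    | [], [] => .eq
    | [], _ :: _ => .lt
    | _ :: _, [] => .gt
    | l :: ls, l' :: ls' =>
        (((compare l.length l'.length).then (cmpInner l l')).then (cmpOuter ls ls'))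
  /-- Lexicographic comparison of equal-length T-lists by ⋞. -/
  def cmpInner : List TTree → List TTree → Ordering
    | [], [] => .eq
    | [], _ :: _ => .lt
    | _ :: _, [] => .gt
    | a :: as, b :: bs => (cmpT a b).then (cmpInner as bs)
end

/-- The order ⋞ on T-trees. -/
def le (C C' : TTree) : Prop := cmpT C C' ≠ .gt

/-- The order ≪ on T-lists: length first, then lexicographically by ⋞. -/
def lle (L L' : List TTree) : Prop :=
  ((compare L.length L'.length).then (cmpInner L L')) ≠ .gt

/-- Canonicity of a T-tree: every T-list sorted non-decreasingly by ⋞,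
    every subtree canonical. -/
inductive Canonical : TTree → Prop where
  | mk (a : ℕ) (ls : List (List TTree))
      (hsorted : ∀ L ∈ ls, L.Chain' le)
      (hrec : ∀ L ∈ ls, ∀ c ∈ L, Canonical c) :
      Canonical (.node a ls)

end TTree

namespace TTree

mutual
  /-- `Ext C C'` holds iff `C'` is a unit extension of `C`, i.e. `C'` results
      from adding a single terminal node to `C`. -/
  inductive Ext : TTree → TTree → Prop where
    | mk (a : ℕ) (ls ls' : List (List TTree)) :
        ExtOuter ls ls' → Ext (.node a ls) (.node a ls')
  /-- The added node lies in exactly one of the T-lists. -/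
  inductive ExtOuter : List (List TTree) → List (List TTree) → Prop where
    | here {L L' : List TTree} (ls : List (List TTree)) :
        ExtList L L' → ExtOuter (L :: ls) (L' :: ls)
    | there {ls ls' : List (List TTree)} (L : List TTree) :
        ExtOuter ls ls' → ExtOuter (L :: ls) (L :: ls')
  /-- Either a new terminal node is inserted in the T-list, or one of its
      trees receives the new terminal node. -/
  inductive ExtList : List TTree → List TTree → Prop where
    | insert (c : TTree) (l₁ l₂ : List TTree) :
        c.isLeaf = true → ExtList (l₁ ++ l₂) (l₁ ++ c :: l₂)
    | deeper {c c' : TTree} (l₁ l₂ : List TTree) :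
        Ext c c' → ExtList (l₁ ++ c :: l₂) (l₁ ++ c' :: l₂)
end

/-- The root-only T-tree associated with `C`: same root type, all T-lists
    emptied. -/
def rootOnly : TTree → TTree
  | .node a ls => .node a (ls.map fun _ => [])

/-- A step in the state graph restricted to canonical T-trees: a unit
    extension whose result is canonical. -/
def canonStep (C C' : TTree) : Prop := Ext C C' ∧ Canonical C'

end TTree

namespace TTree

private lemma nat_compare_self (a : ℕ) : compare a a = .eq := Nat.compare_eq_eq.mpr rfl

private lemma then_eq_lt {o₁ o₂ : Ordering} :
    o₁.then o₂ = .lt ↔ o₁ = .lt ∨ (o₁ = .eq ∧ o₂ = .lt) := by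
  cases o₁ <;> simp [Ordering.then]

private lemma then_eq_eq {o₁ o₂ : Ordering} :
    o₁.then o₂ = .eq ↔ o₁ = .eq ∧ o₂ = .eq := by
  cases o₁ <;> simp [Ordering.then]

private lemma then_ne_gt {o₁ o₂ : Ordering} (h₁ : o₁ ≠ .gt) (h₂ : o₁ = .eq → o₂ ≠ .gt) :
    o₁.then o₂ ≠ .gt := by
  cases o₁ <;> simp_all [Ordering.then]

private lemma refl_aux : ∀ n : ℕ,
    (∀ c : TTree, sizeOf c ≤ n → cmpT c c = .eq) ∧
    (∀ ls : List (List TTree), sizeOf ls ≤ n → cmpOuter ls ls = .eq) ∧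
    (∀ l : List TTree, sizeOf l ≤ n → cmpInner l l = .eq) := by
  intro n
  induction n with
  | zero =>
    refine ⟨fun c h => absurd h ?_, fun ls h => absurd h ?_, fun l h => absurd h ?_⟩
    · cases c; simp
    · cases ls <;> simp
    · cases l <;> simp
  | succ n ih =>
    obtain ⟨ihT, ihO, ihI⟩ := ih
    refine ⟨?_, ?_, ?_⟩
    · rintro ⟨a, ls⟩ h
      simp only [node.sizeOf_spec] at h
      simp [cmpT, ihO ls (by omega), nat_compare_self, Ordering.then]
    · rintro (_ | ⟨l, ls⟩) h
      · simp [cmpOuter]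
      · simp only [List.cons.sizeOf_spec] at h
        simp [cmpOuter, ihI l (by omega), ihO ls (by omega), nat_compare_self, Ordering.then]
    · rintro (_ | ⟨c, cs⟩) h
      · simp [cmpInner]
      · simp only [List.cons.sizeOf_spec] at h
        simp [cmpInner, ihT c (by omega), ihI cs (by omega), Ordering.then]

private lemma cmpT_refl (c : TTree) : cmpT c c = .eq := (refl_aux _).1 c le_rfl
private lemma cmpOuter_refl (ls : List (List TTree)) : cmpOuter ls ls = .eq :=
  (refl_aux _).2.1 ls le_rfl
private lemma cmpInner_refl (l : List TTree) : cmpInner l l = .eq :=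
  (refl_aux _).2.2 l le_rfl

private lemma eq_aux : ∀ n : ℕ,
    (∀ c c' : TTree, sizeOf c ≤ n → cmpT c c' = .eq → c = c') ∧
    (∀ ls ls' : List (List TTree), sizeOf ls ≤ n → cmpOuter ls ls' = .eq → ls = ls') ∧
    (∀ l l' : List TTree, sizeOf l ≤ n → cmpInner l l' = .eq → l = l') := by
  intro n
  induction n with
  | zero =>
    refine ⟨fun c _ h => absurd h ?_, fun ls _ h => absurd h ?_, fun l _ h => absurd h ?_⟩
    · cases c; simp
    · cases ls <;> simp
    · cases l <;> simp
  | succ n ih =>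
    obtain ⟨ihT, ihO, ihI⟩ := ih
    refine ⟨?_, ?_, ?_⟩
    · rintro ⟨a, ls⟩ ⟨b, ms⟩ h heq
      simp only [node.sizeOf_spec] at h
      simp only [cmpT, then_eq_eq] at heq
      obtain ⟨h1, h2⟩ := heq
      have : a = b := Nat.compare_eq_eq.mp h1
      rw [this, ihO ls ms (by omega) h2]
    · rintro (_ | ⟨l, ls⟩) (_ | ⟨m, ms⟩) h heq
      · rfl
      · exact absurd heq (by simp [cmpOuter])
      · exact absurd heq (by simp [cmpOuter])
      · simp only [cmpOuter, then_eq_eq] at heq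
        obtain ⟨⟨-, h2⟩, h3⟩ := heq
        simp only [List.cons.sizeOf_spec] at h
        rw [ihI l m (by omega) h2, ihO ls ms (by omega) h3]
    · rintro (_ | ⟨c, cs⟩) (_ | ⟨d, ds⟩) h heq
      · rfl
      · exact absurd heq (by simp [cmpInner])
      · exact absurd heq (by simp [cmpInner])
      · simp only [cmpInner, then_eq_eq] at heq
        obtain ⟨h1, h2⟩ := heq
        simp only [List.cons.sizeOf_spec] at h
        rw [ihT c d (by omega) h1, ihI cs ds (by omega) h2]

private lemma eq_of_cmpT_eq {c c' : TTree} (h : cmpT c c' = .eq) : c = c' :=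
  (eq_aux (sizeOf c)).1 c c' le_rfl h
private lemma eq_of_cmpInner_eq {l l' : List TTree} (h : cmpInner l l' = .eq) : l = l' :=
  (eq_aux (sizeOf l)).2.2 l l' le_rfl h

private lemma lt_trans_aux : ∀ n : ℕ,
    (∀ a b c : TTree, sizeOf a ≤ n → cmpT a b = .lt → cmpT b c = .lt → cmpT a c = .lt) ∧
    (∀ x y z : List (List TTree), sizeOf x ≤ n →
      cmpOuter x y = .lt → cmpOuter y z = .lt → cmpOuter x z = .lt) ∧
    (∀ x y z : List TTree, sizeOf x ≤ n →
      cmpInner x y = .lt → cmpInner y z = .lt → cmpInner x z = .lt) := by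
  intro n
  induction n with
  | zero =>
    refine ⟨fun a _ _ h => absurd h ?_, fun x _ _ h => absurd h ?_, fun x _ _ h => absurd h ?_⟩
    · cases a; simp
    · cases x <;> simp
    · cases x <;> simp
  | succ n ih =>
    obtain ⟨ihT, ihO, ihI⟩ := ih
    refine ⟨?_, ?_, ?_⟩
    · rintro ⟨x, ls⟩ ⟨y, ms⟩ ⟨z, ns⟩ h h1 h2
      simp only [node.sizeOf_spec] at h
      simp only [cmpT, then_eq_lt] at h1 h2 ⊢
      rcases h1 with h1 | ⟨h1e, h1o⟩ <;> rcases h2 with h2 | ⟨h2e, h2o⟩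
      · exact Or.inl (Nat.compare_eq_lt.mpr
          (lt_trans (Nat.compare_eq_lt.mp h1) (Nat.compare_eq_lt.mp h2)))
      · exact Or.inl (by rwa [← Nat.compare_eq_eq.mp h2e])
      · exact Or.inl (by rwa [Nat.compare_eq_eq.mp h1e])
      · refine Or.inr ⟨by rw [Nat.compare_eq_eq.mp h1e]; exact h2e, ?_⟩
        exact ihO ls ms ns (by omega) h1o h2o
    · rintro (_ | ⟨l, ls⟩) (_ | ⟨m, ms⟩) (_ | ⟨nn, ns⟩) h h1 h2
      · exact absurd h1 (by simp [cmpOuter])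
      · exact absurd h1 (by simp [cmpOuter])
      · exact absurd h2 (by simp [cmpOuter])
      · simp [cmpOuter]
      · exact absurd h1 (by simp [cmpOuter])
      · exact absurd h1 (by simp [cmpOuter])
      · exact absurd h2 (by simp [cmpOuter])
      · simp only [List.cons.sizeOf_spec] at h
        simp only [cmpOuter] at h1 h2 ⊢
        rw [then_eq_lt] at h1 h2 ⊢
        rcases h1 with h1 | ⟨h1e, h1o⟩ <;> rcases h2 with h2 | ⟨h2e, h2o⟩
        · rw [then_eq_lt] at h1 h2
          refine Or.inl (then_eq_lt.mpr ?_)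
          rcases h1 with h1 | ⟨h1e, h1i⟩ <;> rcases h2 with h2 | ⟨h2e, h2i⟩
          · exact Or.inl (Nat.compare_eq_lt.mpr
              (lt_trans (Nat.compare_eq_lt.mp h1) (Nat.compare_eq_lt.mp h2)))
          · exact Or.inl (by rwa [← Nat.compare_eq_eq.mp h2e])
          · exact Or.inl (by rwa [Nat.compare_eq_eq.mp h1e])
          · refine Or.inr ⟨by rw [Nat.compare_eq_eq.mp h1e]; exact h2e,
              ihI l m nn (by omega) h1i h2i⟩
        · rw [then_eq_eq] at h2e
          obtain ⟨-, h2i⟩ := h2e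
          obtain rfl := eq_of_cmpInner_eq h2i
          exact Or.inl h1
        · rw [then_eq_eq] at h1e
          obtain ⟨-, h1i⟩ := h1e
          obtain rfl := eq_of_cmpInner_eq h1i
          exact Or.inl h2
        · rw [then_eq_eq] at h1e h2e
          obtain rfl := eq_of_cmpInner_eq h1e.2
          obtain rfl := eq_of_cmpInner_eq h2e.2
          exact Or.inr ⟨then_eq_eq.mpr ⟨nat_compare_self _, cmpInner_refl _⟩,
            ihO ls ms ns (by omega) h1o h2o⟩
    · rintro (_ | ⟨c, cs⟩) (_ | ⟨d, ds⟩) (_ | ⟨e, es⟩) h h1 h2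
      · exact absurd h1 (by simp [cmpInner])
      · exact absurd h1 (by simp [cmpInner])
      · exact absurd h2 (by simp [cmpInner])
      · simp [cmpInner]
      · exact absurd h1 (by simp [cmpInner])
      · exact absurd h1 (by simp [cmpInner])
      · exact absurd h2 (by simp [cmpInner])
      · simp only [List.cons.sizeOf_spec] at h
        simp only [cmpInner] at h1 h2 ⊢
        rw [then_eq_lt] at h1 h2 ⊢
        rcases h1 with h1 | ⟨h1e, h1i⟩ <;> rcases h2 with h2 | ⟨h2e, h2i⟩
        · exact Or.inl (ihT c d e (by omega) h1 h2)
        · obtain rfl := eq_of_cmpT_eq h2e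
          exact Or.inl h1
        · obtain rfl := eq_of_cmpT_eq h1e
          exact Or.inl h2
        · obtain rfl := eq_of_cmpT_eq h1e
          obtain rfl := eq_of_cmpT_eq h2e
          exact Or.inr ⟨cmpT_refl _, ihI cs ds es (by omega) h1i h2i⟩

private lemma le_trans' {a b c : TTree} (h1 : le a b) (h2 : le b c) : le a c := by
  unfold le at *
  cases hab : cmpT a b with
  | gt => exact absurd hab h1
  | eq => obtain rfl := eq_of_cmpT_eq hab; exact h2
  | lt =>
    cases hbc : cmpT b c with
    | gt => exact absurd hbc h2
    | eq => obtain rfl := eq_of_cmpT_eq hbc; simp [hab]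
    | lt => simp [(lt_trans_aux (sizeOf a)).1 a b c le_rfl hab hbc]

private lemma rootOnly_isLeaf (c : TTree) : (rootOnly c).isLeaf = true := by
  cases c with
  | node a ls => simp [rootOnly, isLeaf, List.all_eq_true]

private lemma canonical_rootOnly (c : TTree) : Canonical (rootOnly c) := by
  cases c with
  | node a ls =>
    refine Canonical.mk a _ ?_ ?_ <;> intro L hL <;>
      rcases List.mem_map.mp hL with ⟨-, -, rfl⟩
    · exact List.isChain_nil
    · intro c hc
      exact absurd hc (List.not_mem_nil)

private lemma cmpOuter_empties_ne_gt (ls : List (List TTree)) :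
    cmpOuter (ls.map fun _ => []) ls ≠ .gt := by
  induction ls with
  | nil => simp [cmpOuter]
  | cons L rest ih =>
    simp only [List.map_cons, cmpOuter]
    refine then_ne_gt (then_ne_gt ?_ ?_) fun _ => ih
    · cases L <;> simp [Nat.compare_eq_gt]
    · intro hEq
      have : L = [] := by
        cases L with
        | nil => rfl
        | cons x xs => simp [Nat.compare_eq_eq] at hEq
      subst this
      simp [cmpInner]

private lemma rootOnly_le (c : TTree) : le (rootOnly c) c := by
  cases c with
  | node a ls =>
    show cmpT (.node a (ls.map fun _ => [])) (.node a ls) ≠ .gt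
    simp only [cmpT]
    exact then_ne_gt (by simp [nat_compare_self]) fun _ => cmpOuter_empties_ne_gt ls

private lemma lle_of_le_head {t' c : TTree} {L : List TTree} (h : le t' c) :
    lle (t' :: L) (c :: L) := by
  unfold lle
  refine then_ne_gt (by simp [Nat.compare_eq_gt]) fun _ => ?_
  simp only [cmpInner]
  exact then_ne_gt h fun _ => by simp [cmpInner_refl]

private lemma lle_length {t L : List TTree} (h : lle t L) : t.length ≤ L.length := by
  unfold lle at h
  by_contra hlen
  have : compare t.length L.length = .gt := Nat.compare_eq_gt.mpr (by omega)
  simp [this, Ordering.then] at h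

private lemma lle_cons {t : List TTree} {c : TTree} {L : List TTree}
    (h : t.length ≤ L.length) : lle t (c :: L) := by
  unfold lle
  have h2 : compare t.length (c :: L).length = Ordering.lt :=
    Nat.compare_eq_lt.mpr (by simp; omega)
  rw [h2]
  simp [Ordering.then]

private lemma growList (L : List TTree) (hchain : L.Chain' le)
    (hcanon : ∀ c ∈ L, Canonical c)
    (hgrow : ∀ c ∈ L, Relation.ReflTransGen
        (fun t t' => Ext t t' ∧ Canonical t' ∧ le t' c) (rootOnly c) c) :
    Relation.ReflTransGen
      (fun t t' => ExtList t t' ∧ t'.Chain' le ∧ (∀ x ∈ t', Canonical x) ∧ lle t' L)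
      [] L := by
  induction L with
  | nil => exact .refl
  | cons c L' ih =>
    have hchain' : L'.Chain' le := hchain.tail
    have hhead : ∀ y ∈ L'.head?, le c y := (List.isChain_cons.mp hchain).1
    have p1 := ih hchain' (fun x hx => hcanon x (List.mem_cons_of_mem _ hx))
      (fun x hx => hgrow x (List.mem_cons_of_mem _ hx))
    have p1' : Relation.ReflTransGen
        (fun t t' => ExtList t t' ∧ t'.Chain' le ∧ (∀ x ∈ t', Canonical x) ∧ lle t' (c :: L'))
        [] L' :=
      Relation.ReflTransGen.mono (fun _ _ ⟨h1, h2, h3, h4⟩ => ⟨h1, h2, h3, lle_cons (lle_length h4)⟩) _ _ p1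
    have step : ExtList L' (rootOnly c :: L') ∧ (rootOnly c :: L').Chain' le ∧
        (∀ x ∈ rootOnly c :: L', Canonical x) ∧ lle (rootOnly c :: L') (c :: L') := by
      refine ⟨ExtList.insert (rootOnly c) [] L' (rootOnly_isLeaf c), ?_, ?_, ?_⟩
      · exact List.isChain_cons.mpr
          ⟨fun y hy => le_trans' (rootOnly_le c) (hhead y hy), hchain'⟩
      · intro x hx
        rcases List.mem_cons.mp hx with rfl | hx
        · exact canonical_rootOnly c
        · exact hcanon x (List.mem_cons_of_mem _ hx)
      · exact lle_of_le_head (rootOnly_le c)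
    have p2 : Relation.ReflTransGen
        (fun t t' => ExtList t t' ∧ t'.Chain' le ∧ (∀ x ∈ t', Canonical x) ∧ lle t' (c :: L'))
        (rootOnly c :: L') (c :: L') := by
      refine Relation.ReflTransGen.lift (fun t => t :: L') ?_ _ _ (hgrow c List.mem_cons_self)
      rintro t t' ⟨h1, h2, h3⟩
      refine ⟨ExtList.deeper [] L' h1, ?_, ?_, lle_of_le_head h3⟩
      · exact List.isChain_cons.mpr ⟨fun y hy => le_trans' h3 (hhead y hy), hchain'⟩
      · intro x hx
        rcases List.mem_cons.mp hx with rfl | hx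
        · exact h2
        · exact hcanon x (List.mem_cons_of_mem _ hx)
    exact (p1'.tail step).trans p2

private lemma growOuter (ls : List (List TTree))
    (hsorted : ∀ L ∈ ls, L.Chain' le)
    (hcanon : ∀ L ∈ ls, ∀ c ∈ L, Canonical c)
    (hgrow : ∀ L ∈ ls, ∀ c ∈ L, Relation.ReflTransGen
        (fun t t' => Ext t t' ∧ Canonical t' ∧ le t' c) (rootOnly c) c) :
    Relation.ReflTransGen
      (fun m m' => ExtOuter m m' ∧ (∀ L ∈ m', L.Chain' le) ∧
        (∀ L ∈ m', ∀ c ∈ L, Canonical c) ∧ cmpOuter m' ls ≠ .gt)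
      (ls.map fun _ => ([] : List TTree)) ls := by
  induction ls with
  | nil => exact .refl
  | cons L rest ih =>
    have p1 := ih (fun x hx => hsorted x (List.mem_cons_of_mem _ hx))
      (fun x hx => hcanon x (List.mem_cons_of_mem _ hx))
      (fun x hx => hgrow x (List.mem_cons_of_mem _ hx))
    have p1' : Relation.ReflTransGen
        (fun m m' => ExtOuter m m' ∧ (∀ K ∈ m', K.Chain' le) ∧
          (∀ K ∈ m', ∀ c ∈ K, Canonical c) ∧ cmpOuter m' (L :: rest) ≠ .gt)
        ([] :: rest.map fun _ => ([] : List TTree)) ([] :: rest) := by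
      refine Relation.ReflTransGen.lift (fun m => [] :: m) ?_ _ _ p1
      rintro m m' ⟨h1, h2, h3, h4⟩
      refine ⟨ExtOuter.there [] h1, ?_, ?_, ?_⟩
      · intro K hK
        rcases List.mem_cons.mp hK with rfl | hK
        · exact List.isChain_nil
        · exact h2 K hK
      · intro K hK
        rcases List.mem_cons.mp hK with rfl | hK
        · intro c hc; exact absurd hc (List.not_mem_nil)
        · exact h3 K hK
      · simp only [cmpOuter]
        refine then_ne_gt (then_ne_gt ?_ ?_) fun _ => h4
        · cases L <;> simp [Nat.compare_eq_gt]
        · intro hEq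
          have : L = [] := by
            cases L with
            | nil => rfl
            | cons x xs => simp [Nat.compare_eq_eq] at hEq
          subst this
          simp [cmpInner]
    have p2 : Relation.ReflTransGen
        (fun m m' => ExtOuter m m' ∧ (∀ K ∈ m', K.Chain' le) ∧
          (∀ K ∈ m', ∀ c ∈ K, Canonical c) ∧ cmpOuter m' (L :: rest) ≠ .gt)
        ([] :: rest) (L :: rest) := by
      refine Relation.ReflTransGen.lift (fun t => t :: rest) ?_ _ _
        (growList L (hsorted L List.mem_cons_self)
          (hcanon L List.mem_cons_self) (hgrow L List.mem_cons_self))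
      rintro t t' ⟨h1, h2, h3, h4⟩
      refine ⟨ExtOuter.here rest h1, ?_, ?_, ?_⟩
      · intro K hK
        rcases List.mem_cons.mp hK with rfl | hK
        · exact h2
        · exact hsorted K (List.mem_cons_of_mem _ hK)
      · intro K hK
        rcases List.mem_cons.mp hK with rfl | hK
        · exact h3
        · exact hcanon K (List.mem_cons_of_mem _ hK)
      · simp only [cmpOuter]
        exact then_ne_gt h4 fun _ => by simp [cmpOuter_refl]
    refine Relation.ReflTransGen.trans ?_ p2
    simpa using p1'

private lemma grow : ∀ n : ℕ, ∀ C : TTree, sizeOf C ≤ n → Canonical C →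
    Relation.ReflTransGen (fun t t' => Ext t t' ∧ Canonical t' ∧ le t' C) (rootOnly C) C := by
  intro n
  induction n with
  | zero =>
    intro C h
    exact absurd h (by cases C; simp)
  | succ n ih =>
    rintro ⟨a, ls⟩ h hc
    cases hc with
    | mk _ _ hsorted hrec =>
      simp only [node.sizeOf_spec] at h
      have hgrow : ∀ L ∈ ls, ∀ c ∈ L, Relation.ReflTransGen
          (fun t t' => Ext t t' ∧ Canonical t' ∧ le t' c) (rootOnly c) c := by
        intro L hL c hcm
        have s1 : sizeOf L < sizeOf ls := List.sizeOf_lt_of_mem hL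
        have s2 : sizeOf c < sizeOf L := List.sizeOf_lt_of_mem hcm
        exact ih c (by omega) (hrec L hL c hcm)
      have p := growOuter ls hsorted hrec hgrow
      have p' : Relation.ReflTransGen
          (fun t t' => Ext t t' ∧ Canonical t' ∧ le t' (TTree.node a ls))
          (TTree.node a (ls.map fun _ => [])) (TTree.node a ls) := by
        refine Relation.ReflTransGen.lift (fun m => TTree.node a m) ?_ _ _ p
        rintro m m' ⟨h1, h2, h3, h4⟩
        refine ⟨Ext.mk a m m' h1, Canonical.mk a m' h2 h3, ?_⟩
        show cmpT (.node a m') (.node a ls) ≠ .gt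
        simp only [cmpT]
        exact then_ne_gt (by simp [nat_compare_self]) fun _ => h4
      exact p'

end TTree

/-- Every canonical T-tree can be reached from the single-node T-tree by a
    sequence of unit extensions all of whose results are canonical: the
    subgraph of the state graph induced by canonical T-trees is connected. -/
theorem canonical_reachable :
    ∀ C : TTree, TTree.Canonical C →
      Relation.ReflTransGen TTree.canonStep (TTree.rootOnly C) C := by
  intro C hC
  exact Relation.ReflTransGen.mono (fun _ _ ⟨h1, h2, _⟩ => ⟨h1, h2⟩) _ _ (TTree.grow (sizeOf C) C le_rfl hC)
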